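/- arXiv:1010.2630 — 5 statements merged into one kernel-verified Lean document; each statement's English description precedes it below -/
import Mathlib

section
/- Let x be a point of the open unit ball 𝔹ⁿ with x ≠ 0, let x* = x/|x|² be its inversion in the unit sphere, and let r > 0. Then the hyperbolic ball B_ρ(x,r) coincides with the Apollonian ball B_{x,x*}^{|x|·tanh(r/2)}; that is, for every y ∈ 𝔹ⁿ one has ρ(x,y) < r if and only if |x − y| < |x|·tanh(r/2)·|x* − y|. -/
/-!
With `x* = x/|x|²`, expanding both squared norms gives
`|x|²·|x* − y|² = |x − y|² + (1 − |x|²)(1 − |y|²)`. The condition `ρ(x,y) < r` reads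
`|x − y| < sinh(r/2)·√(1 − |x|²)·√(1 − |y|²)`; squaring, using the identity and
`cosh² = 1 + sinh²`, it becomes `|x − y| < tanh(r/2)·|x|·|x* − y|`.
-/

/-- Hyperbolic distance in the open unit ball of `ℝⁿ`:
`ρ(x,y) = 2 · arsinh(|x−y| / (√(1−|x|²)·√(1−|y|²)))`. -/
noncomputable def hypDistBall {n : ℕ} (x y : EuclideanSpace ℝ (Fin n)) : ℝ :=
  2 * Real.arsinh (‖x - y‖ / (Real.sqrt (1 - ‖x‖ ^ 2) * Real.sqrt (1 - ‖y‖ ^ 2)))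

open Real

theorem norm_sq_mul_norm_inv_sq_smul_sub_sq {E : Type*} [NormedAddCommGroup E]
    [InnerProductSpace ℝ E] {x : E} (hx : x ≠ 0) (y : E) :
    ‖x‖ ^ 2 * ‖(‖x‖ ^ 2)⁻¹ • x - y‖ ^ 2 = ‖x - y‖ ^ 2 + (1 - ‖x‖ ^ 2) * (1 - ‖y‖ ^ 2) := by
  have hx2 : ‖x‖ ^ 2 ≠ 0 := by positivity
  rw [norm_sub_sq_real, norm_sub_sq_real, real_inner_smul_left, norm_smul, norm_inv,
    norm_pow, norm_norm]
  field_simp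
  ring

theorem two_mul_arsinh_lt_iff {t r : ℝ} : 2 * arsinh t < r ↔ t < sinh (r / 2) := by
  rw [← lt_div_iff₀' two_pos, ← sinh_lt_sinh, sinh_arsinh]

theorem hypDistBall_lt_iff {n : ℕ} {x y : EuclideanSpace ℝ (Fin n)} (hx : ‖x‖ < 1)
    (hy : ‖y‖ < 1) (r : ℝ) :
    hypDistBall x y < r ↔ ‖x - y‖ < sinh (r / 2) * (√(1 - ‖x‖ ^ 2) * √(1 - ‖y‖ ^ 2)) := by
  have hxy : 0 < √(1 - ‖x‖ ^ 2) * √(1 - ‖y‖ ^ 2) := by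
    have := norm_nonneg x
    have := norm_nonneg y
    apply mul_pos <;> apply sqrt_pos.mpr <;> nlinarith
  rw [hypDistBall, two_mul_arsinh_lt_iff, div_lt_iff₀ hxy]

theorem lt_mul_tanh_iff_lt_sinh_mul {a p m θ : ℝ} (ha : 0 ≤ a) (hp : 0 ≤ p) (hm : 0 ≤ m)
    (hθ : 0 ≤ θ) (hm_sq : m ^ 2 = a ^ 2 + p ^ 2) :
    a < m * tanh θ ↔ a < sinh θ * p := by
  have hs : 0 ≤ sinh θ := sinh_nonneg_iff.mpr hθ
  rw [tanh_eq_sinh_div_cosh, mul_div_assoc', lt_div_iff₀ (cosh_pos θ),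
    ← pow_lt_pow_iff_left₀ (by positivity) (by positivity) two_ne_zero,
    ← pow_lt_pow_iff_left₀ ha (by positivity) two_ne_zero, mul_pow, mul_pow, mul_pow, hm_sq,
    cosh_sq']
  constructor <;> intro h <;> linarith

/-- The hyperbolic ball `B_ρ(x,r)` coincides with the Apollonian ball
`B_{x,x*}^{|x|·tanh(r/2)}` with base points `x` and `x* = x/|x|²`. -/
theorem hyperbolic_ball_is_apollonian {n : ℕ} (x : EuclideanSpace ℝ (Fin n))
    (hx : ‖x‖ < 1) (hx0 : x ≠ 0) (r : ℝ) (hr : 0 < r)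
    (y : EuclideanSpace ℝ (Fin n)) (hy : ‖y‖ < 1) :
    hypDistBall x y < r ↔
      ‖x - y‖ < ‖x‖ * Real.tanh (r / 2) * ‖(‖x‖ ^ 2)⁻¹ • x - y‖ := by
  have hxy : 0 ≤ 1 - ‖x‖ ^ 2 ∧ 0 ≤ 1 - ‖y‖ ^ 2 := by
    constructor <;> nlinarith [norm_nonneg x, norm_nonneg y]
  have hm_sq : (‖x‖ * ‖(‖x‖ ^ 2)⁻¹ • x - y‖) ^ 2
      = ‖x - y‖ ^ 2 + (√(1 - ‖x‖ ^ 2) * √(1 - ‖y‖ ^ 2)) ^ 2 := by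
    rw [mul_pow, norm_sq_mul_norm_inv_sq_smul_sub_sq hx0, mul_pow, sq_sqrt hxy.1, sq_sqrt hxy.2]
  rw [hypDistBall_lt_iff hx hy, mul_right_comm]
  exact (lt_mul_tanh_iff_lt_sinh_mul (norm_nonneg _) (by positivity) (by positivity)
    (by positivity) hm_sq).symm
end

section
/- For all real numbers r, s ∈ [0,1) one has √((1−r²)(1−s²)) ≤ 1 − rs − (1/2)·(r−s)²/(1−rs) ≤ 1 − ((r+s)/2)². -/
/-!
Since `(1 - r²)(1 - s²) = (1 - rs)² - (r - s)²`, the first inequality is the tangent-line bound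
`√x ≤ (x + t²) / (2t)` for the concave square root at `x = t²`, `t = 1 - rs`. The middle term equals
`1 - rs - (r - s)² / (2t)` and the right-hand side equals `1 - rs - (r - s)² / 4`, so the second
inequality only says `t ≤ 2`.
-/

theorem Real.sqrt_le_add_sq_div_two_mul {x t : ℝ} (hx : 0 ≤ x) (ht : 0 < t) :
    √x ≤ (x + t ^ 2) / (2 * t) := by
  rw [le_div_iff₀ (by positivity)]
  calc √x * (2 * t) = 2 * √x * t := by ring
    _ ≤ √x ^ 2 + t ^ 2 := two_mul_le_add_sq _ _
    _ = x + t ^ 2 := by rw [Real.sq_sqrt hx]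

theorem sqrt_ineq_one (r s : ℝ) (hr : 0 ≤ r) (hr1 : r < 1) (hs : 0 ≤ s) (hs1 : s < 1) :
    Real.sqrt ((1 - r ^ 2) * (1 - s ^ 2)) ≤ 1 - r * s - (1 / 2) * (r - s) ^ 2 / (1 - r * s) ∧
      1 - r * s - (1 / 2) * (r - s) ^ 2 / (1 - r * s) ≤ 1 - ((r + s) / 2) ^ 2 := by
  have hrs : 0 ≤ r * s := mul_nonneg hr hs
  have ht : 0 < 1 - r * s := by nlinarith
  have hprod : 0 ≤ (1 - r ^ 2) * (1 - s ^ 2) := by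
    apply mul_nonneg <;> nlinarith
  constructor
  · calc Real.sqrt ((1 - r ^ 2) * (1 - s ^ 2))
        ≤ ((1 - r ^ 2) * (1 - s ^ 2) + (1 - r * s) ^ 2) / (2 * (1 - r * s)) :=
          Real.sqrt_le_add_sq_div_two_mul hprod ht
      _ = 1 - r * s - (1 / 2) * (r - s) ^ 2 / (1 - r * s) := by
          field_simp
          ring
  · have hdiv : (1 / 2) * (r - s) ^ 2 / 2 ≤ (1 / 2) * (r - s) ^ 2 / (1 - r * s) :=
      div_le_div_of_nonneg_left (by positivity) ht (by linarith)
    calc 1 - r * s - (1 / 2) * (r - s) ^ 2 / (1 - r * s)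
        ≤ 1 - r * s - (1 / 2) * (r - s) ^ 2 / 2 := by linarith
      _ = 1 - ((r + s) / 2) ^ 2 := by ring
end

section
/- For all real numbers r, s ∈ [0,1) one has √((1−r²)(1−s²)) ≤ √(1 + r²s²) − (r² + s²)/(2√(1 + r²s²)). -/
/-! Since `(1 + r²s²) - (1 - r²)(1 - s²) = r² + s²`, the right-hand side is the tangent line of the
concave function `√·` at `1 + r²s²`, evaluated at `(1 - r²)(1 - s²)`; the tangent lies above the graph
because `2√a√b ≤ a + b`. -/

theorem Real.sqrt_le_sqrt_add_sub_div {a b : ℝ} (ha : 0 ≤ a) (hb : 0 < b) :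
    √a ≤ √b + (a - b) / (2 * √b) := by
  have hsum : √b + (a - b) / (2 * √b) = (√a ^ 2 + √b ^ 2) / (2 * √b) := by
    rw [Real.sq_sqrt ha, Real.sq_sqrt hb.le]
    field_simp
    rw [Real.sq_sqrt hb.le]
    ring
  rw [hsum, le_div_iff₀ (by positivity)]
  nlinarith [sq_nonneg (√a - √b)]

theorem sqrt_ineq_two (r s : ℝ) (hr : 0 ≤ r) (hr1 : r < 1) (hs : 0 ≤ s) (hs1 : s < 1) :
    Real.sqrt ((1 - r ^ 2) * (1 - s ^ 2)) ≤
      Real.sqrt (1 + r ^ 2 * s ^ 2) - (r ^ 2 + s ^ 2) / (2 * Real.sqrt (1 + r ^ 2 * s ^ 2)) := by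
  have hr2 : r ^ 2 < 1 := by nlinarith
  have hs2 : s ^ 2 < 1 := by nlinarith
  have hdiff : r ^ 2 + s ^ 2 = -((1 - r ^ 2) * (1 - s ^ 2) - (1 + r ^ 2 * s ^ 2)) := by ring
  rw [hdiff, neg_div, sub_neg_eq_add]
  exact Real.sqrt_le_sqrt_add_sub_div (by nlinarith) (by positivity)
end

section
/- For all points x, y in the open unit ball 𝔹ⁿ one has tanh(ρ(x,y)/4) ≥ |x−y| / (1 + |x||y| + √(1−|x|²)·√(1−|y|²)) ≥ |x−y|/2. -/
/-!
With `p = √(1-|x|²)·√(1-|y|²)` and `d = |x-y|`, the half-angle formula `tanh (u/2) = sinh u / (1 + cosh u)`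
at `u = arsinh (d/p)` gives `tanh (ρ/4) = d / (p + √(p² + d²))`. The triangle inequality `d ≤ |x| + |y|`
yields `p² + d² ≤ (1 + |x||y|)²`, which is the first bound, and Cauchy–Schwarz for the unit vectors
`(|x|, √(1-|x|²))`, `(|y|, √(1-|y|²))` gives `|x||y| + p ≤ 1`, which is the second.
-/

open Real

theorem Real.tanh_half (u : ℝ) : tanh (u / 2) = sinh u / (1 + cosh u) := by
  conv_rhs => rw [← mul_div_cancel₀ u (two_ne_zero' ℝ), sinh_two_mul, cosh_two_mul]
  have hc : 0 < cosh (u / 2) := cosh_pos _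
  rw [tanh_eq_sinh_div_cosh, add_comm (cosh _ ^ 2), ← add_assoc, ← cosh_sq']
  field_simp
  ring

theorem Real.tanh_half_arsinh_div (d : ℝ) {p : ℝ} (hp : 0 < p) :
    tanh (arsinh (d / p) / 2) = d / (p + √(p ^ 2 + d ^ 2)) := by
  have hsqrt : √(1 + (d / p) ^ 2) = √(p ^ 2 + d ^ 2) / p := by
    rw [show 1 + (d / p) ^ 2 = (p ^ 2 + d ^ 2) / p ^ 2 by field_simp, sqrt_div' _ (sq_nonneg p),
      sqrt_sq hp.le]
  rw [tanh_half, sinh_arsinh, cosh_arsinh, hsqrt]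
  have : 0 < p + √(p ^ 2 + d ^ 2) := by positivity
  field_simp

theorem one_sub_sq_mul_one_sub_sq_add_sq_norm_sub_le {E : Type*} [SeminormedAddCommGroup E]
    (x y : E) : (1 - ‖x‖ ^ 2) * (1 - ‖y‖ ^ 2) + ‖x - y‖ ^ 2 ≤ (1 + ‖x‖ * ‖y‖) ^ 2 := by
  have hd : ‖x - y‖ ^ 2 ≤ (‖x‖ + ‖y‖) ^ 2 := pow_le_pow_left₀ (norm_nonneg _) (norm_sub_le x y) 2
  nlinarith

theorem Real.mul_add_sqrt_one_sub_sq_mul_sqrt_one_sub_sq_le_one {s t : ℝ} (hs : s ^ 2 ≤ 1)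
    (ht : t ^ 2 ≤ 1) : s * t + √(1 - s ^ 2) * √(1 - t ^ 2) ≤ 1 := by
  have ha := sq_sqrt (sub_nonneg.mpr hs)
  have hb := sq_sqrt (sub_nonneg.mpr ht)
  nlinarith [sq_nonneg (s - t), sq_nonneg (√(1 - s ^ 2) - √(1 - t ^ 2))]

theorem tanh_quarter_hypDist_lower_bound {n : ℕ} (x y : EuclideanSpace ℝ (Fin n))
    (hx : ‖x‖ < 1) (hy : ‖y‖ < 1) :
    Real.tanh (hypDistBall x y / 4) ≥
      ‖x - y‖ / (1 + ‖x‖ * ‖y‖ + Real.sqrt (1 - ‖x‖ ^ 2) * Real.sqrt (1 - ‖y‖ ^ 2)) ∧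
    ‖x - y‖ / (1 + ‖x‖ * ‖y‖ + Real.sqrt (1 - ‖x‖ ^ 2) * Real.sqrt (1 - ‖y‖ ^ 2)) ≥
      ‖x - y‖ / 2 := by
  have hx2 : ‖x‖ ^ 2 < 1 := by nlinarith [norm_nonneg x]
  have hy2 : ‖y‖ ^ 2 < 1 := by nlinarith [norm_nonneg y]
  set p := √(1 - ‖x‖ ^ 2) * √(1 - ‖y‖ ^ 2) with hp_def
  have hp : 0 < p := mul_pos (sqrt_pos.mpr (by linarith)) (sqrt_pos.mpr (by linarith))
  have hp2 : p ^ 2 = (1 - ‖x‖ ^ 2) * (1 - ‖y‖ ^ 2) := by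
    rw [mul_pow, sq_sqrt (by linarith), sq_sqrt (by linarith)]
  have htanh : tanh (hypDistBall x y / 4) = ‖x - y‖ / (p + √(p ^ 2 + ‖x - y‖ ^ 2)) := by
    rw [← tanh_half_arsinh_div _ hp, hypDistBall, ← hp_def]
    congr 1
    ring
  have hroot : √(p ^ 2 + ‖x - y‖ ^ 2) ≤ 1 + ‖x‖ * ‖y‖ :=
    (sqrt_le_left (by positivity)).mpr
      (hp2 ▸ one_sub_sq_mul_one_sub_sq_add_sq_norm_sub_le x y)
  have hcs : ‖x‖ * ‖y‖ + p ≤ 1 :=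
    mul_add_sqrt_one_sub_sq_mul_sqrt_one_sub_sq_le_one hx2.le hy2.le
  constructor
  · rw [htanh]
    exact div_le_div_of_nonneg_left (norm_nonneg _) (by positivity) (by linarith)
  · exact div_le_div_of_nonneg_left (norm_nonneg _) (by positivity) (by linarith)
end

section
/- For all points x, y in the open unit ball 𝔹ⁿ one has tanh(ρ(x,y)/4) ≥ |x−y| / ( 1 + |x||y| + √(1 + |x|²|y|²) − (|x|² + |y|²)/(2√(1 + |x|²|y|²)) ). -/
/-!
Put `a = ‖x‖`, `b = ‖y‖`, `d = ‖x - y‖` and `P = √(1 - a²) √(1 - b²)`. The half-angle formula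
for `tanh` gives the exact value `tanh (ρ(x,y) / 4) = d / (P + √(P² + d²))`. The triangle
inequality `d ≤ a + b` yields `P² + d² ≤ (1 + ab)²`, and since `P² = t² - (a² + b²)` with
`t = √(1 + a²b²)`, AM-GM (`2Pt ≤ P² + t²`) yields `P ≤ t - (a² + b²) / (2t)`.
-/

open Real

namespace Real

theorem tanh_half_s13 (u : ℝ) : tanh (u / 2) = sinh u / (1 + cosh u) := by
  set v := u / 2
  have hu : u = 2 * v := by ring
  rw [hu, sinh_two_mul, cosh_two_mul, tanh_eq_sinh_div_cosh]
  field_simp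
  rw [cosh_sq]
  ring

theorem tanh_half_arsinh (s : ℝ) : tanh (arsinh s / 2) = s / (1 + √(1 + s ^ 2)) := by
  rw [tanh_half_s13, sinh_arsinh, cosh_arsinh]

theorem tanh_half_arsinh_div_s13 (d : ℝ) {P : ℝ} (hP : 0 < P) :
    tanh (arsinh (d / P) / 2) = d / (P + √(P ^ 2 + d ^ 2)) := by
  have hsqrt : √(1 + (d / P) ^ 2) = √(P ^ 2 + d ^ 2) / P := by
    rw [div_pow, one_add_div (by positivity), sqrt_div' _ (by positivity), sqrt_sq hP.le]
  rw [tanh_half_arsinh, hsqrt]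
  field_simp

end Real

theorem le_sub_div_two_mul_of_sq_add_eq {p c t : ℝ} (ht : 0 < t) (h : p ^ 2 + c = t ^ 2) :
    p ≤ t - c / (2 * t) := by
  have hc : c / (2 * t) ≤ t - p := by
    rw [div_le_iff₀ (by positivity)]
    nlinarith [sq_nonneg (p - t)]
  linarith

theorem tanh_quarter_hypDist_lower_bound_four {n : ℕ} (x y : EuclideanSpace ℝ (Fin n))
    (hx : ‖x‖ < 1) (hy : ‖y‖ < 1) :
    Real.tanh (hypDistBall x y / 4) ≥
      ‖x - y‖ / (1 + ‖x‖ * ‖y‖ + Real.sqrt (1 + ‖x‖ ^ 2 * ‖y‖ ^ 2) -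
        (‖x‖ ^ 2 + ‖y‖ ^ 2) / (2 * Real.sqrt (1 + ‖x‖ ^ 2 * ‖y‖ ^ 2))) := by
  have ha : 0 < 1 - ‖x‖ ^ 2 := by nlinarith [norm_nonneg x]
  have hb : 0 < 1 - ‖y‖ ^ 2 := by nlinarith [norm_nonneg y]
  set P := √(1 - ‖x‖ ^ 2) * √(1 - ‖y‖ ^ 2) with hP
  have hP_pos : 0 < P := by positivity
  have hP_sq : P ^ 2 = (1 - ‖x‖ ^ 2) * (1 - ‖y‖ ^ 2) := by
    rw [hP, mul_pow, sq_sqrt ha.le, sq_sqrt hb.le]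
  have hroot : √(P ^ 2 + ‖x - y‖ ^ 2) ≤ 1 + ‖x‖ * ‖y‖ := by
    rw [sqrt_le_left (by positivity), hP_sq]
    exact one_sub_sq_mul_one_sub_sq_add_sq_norm_sub_le x y
  have hP_le : P ≤ √(1 + ‖x‖ ^ 2 * ‖y‖ ^ 2) -
      (‖x‖ ^ 2 + ‖y‖ ^ 2) / (2 * √(1 + ‖x‖ ^ 2 * ‖y‖ ^ 2)) := by
    refine le_sub_div_two_mul_of_sq_add_eq (by positivity) ?_
    rw [hP_sq, sq_sqrt (by positivity)]
    ring
  rw [hypDistBall, show 2 * arsinh (‖x - y‖ / P) / 4 = arsinh (‖x - y‖ / P) / 2 by ring,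
    tanh_half_arsinh_div_s13 _ hP_pos, ge_iff_le]
  exact div_le_div_of_nonneg_left (norm_nonneg _) (by positivity) (by linarith)
end
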